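/- arXiv:1611.00416 — 2 statements merged into one kernel-verified Lean document; each statement's English description precedes it below -/
import Mathlib

section
/- Let V be a 4-dimensional complex symplectic vector space. There do not exist three pairwise distinct Lagrangian planes P₁, P₂, P₃ ⊆ V such that the three pairwise intersections Pᵢ ∩ Pⱼ are three distinct lines and P₁ + P₂ + P₃ is 3-dimensional. -/
/-!
Let `H = P₁ + P₂ + P₃`. Since `dim (Pᵢ ∩ Pⱼ) = 1`, each `Pᵢ + Pⱼ` is 3-dimensional, hence equal
to `H`. A vector of `Pᵢ ∩ Pⱼ` is `ω`-orthogonal to both Lagrangian planes, so to `Pᵢ + Pⱼ = H`.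
By nondegeneracy the `ω`-orthogonal of `H` is a line, so it equals both `P₁ ∩ P₂` and `P₁ ∩ P₃`,
which are distinct.
-/

open Module
open LinearMap (BilinForm)

namespace LinearMap.BilinForm

section CommSemiring

variable {R M : Type*} [CommSemiring R] [AddCommMonoid M] [Module R M]

theorem inf_le_orthogonal_sup {B : BilinForm R M} {P Q : Submodule R M}
    (hP : P ≤ B.orthogonal P) (hQ : Q ≤ B.orthogonal Q) : P ⊓ Q ≤ B.orthogonal (P ⊔ Q) := by
  rintro u ⟨huP, huQ⟩ w hw
  obtain ⟨p, hp, q, hq, rfl⟩ := Submodule.mem_sup.mp hw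
  rw [map_add, LinearMap.add_apply, hP huP p hp, hQ huQ q hq, add_zero]

end CommSemiring

section Field

variable {K V : Type*} [Field K] [AddCommGroup V] [Module K V] [FiniteDimensional K V]
  {B : BilinForm K V}

theorem finrank_add_finrank_orthogonal_of_separatingLeft (hB : B.SeparatingLeft)
    (W : Submodule K V) : finrank K W + finrank K (B.orthogonal W) = finrank K V := by
  have h := finrank_add_finrank_orthogonal' (B := B) W
  rwa [separatingLeft_iff_ker_eq_bot.mp hB, inf_bot_eq, finrank_bot, add_zero] at h

theorem eq_orthogonal_of_le_of_finrank_add (hB : B.SeparatingLeft) {L W : Submodule K V}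
    (hLW : L ≤ B.orthogonal W) (hdim : finrank K L + finrank K W = finrank K V) :
    L = B.orthogonal W :=
  Submodule.eq_of_le_of_finrank_eq hLW
    (by have := finrank_add_finrank_orthogonal_of_separatingLeft hB W; omega)

end Field

end LinearMap.BilinForm

theorem Submodule.sup_eq_of_le_of_finrank_add_eq {K V : Type*} [Field K] [AddCommGroup V]
    [Module K V] [FiniteDimensional K V] {P Q H : Submodule K V} (hPQ : P ⊔ Q ≤ H)
    (hdim : finrank K P + finrank K Q = finrank K H + finrank K ↥(P ⊓ Q)) : P ⊔ Q = H :=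
  eq_of_le_of_finrank_eq hPQ (by have := finrank_sup_add_finrank_inf_eq P Q; omega)

open LinearMap.BilinForm in
theorem stmt1_general (V : Type*) [AddCommGroup V] [Module ℂ V] [FiniteDimensional ℂ V]
    (hV : Module.finrank ℂ V = 4)
    (ω : V →ₗ[ℂ] V →ₗ[ℂ] ℂ)
    (hnd : ∀ v : V, (∀ w : V, ω v w = 0) → v = 0) :
    ¬ ∃ P₁ P₂ P₃ : Submodule ℂ V,
      (Module.finrank ℂ P₁ = 2 ∧ ∀ u ∈ P₁, ∀ v ∈ P₁, ω u v = 0) ∧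
      (Module.finrank ℂ P₂ = 2 ∧ ∀ u ∈ P₂, ∀ v ∈ P₂, ω u v = 0) ∧
      (Module.finrank ℂ P₃ = 2 ∧ ∀ u ∈ P₃, ∀ v ∈ P₃, ω u v = 0) ∧
      P₁ ≠ P₂ ∧ P₁ ≠ P₃ ∧ P₂ ≠ P₃ ∧
      Module.finrank ℂ ↥(P₁ ⊓ P₂) = 1 ∧
      Module.finrank ℂ ↥(P₁ ⊓ P₃) = 1 ∧
      Module.finrank ℂ ↥(P₂ ⊓ P₃) = 1 ∧
      (P₁ ⊓ P₂) ≠ (P₁ ⊓ P₃) ∧ (P₁ ⊓ P₂) ≠ (P₂ ⊓ P₃) ∧ (P₁ ⊓ P₃) ≠ (P₂ ⊓ P₃) ∧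
      Module.finrank ℂ ↥(P₁ ⊔ P₂ ⊔ P₃) = 3 := by
  rintro ⟨P₁, P₂, P₃, ⟨h1d, h1⟩, ⟨h2d, h2⟩, ⟨h3d, h3⟩, -, -, -,
    hL12, hL13, -, hLne, -, -, hH⟩
  set H := P₁ ⊔ P₂ ⊔ P₃
  have iso₁ : P₁ ≤ orthogonal ω P₁ := fun v hv u hu ↦ h1 u hu v hv
  have iso₂ : P₂ ≤ orthogonal ω P₂ := fun v hv u hu ↦ h2 u hu v hv
  have iso₃ : P₃ ≤ orthogonal ω P₃ := fun v hv u hu ↦ h3 u hu v hv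
  have H12 : P₁ ⊔ P₂ = H :=
    Submodule.sup_eq_of_le_of_finrank_add_eq le_sup_left (by omega)
  have H13 : P₁ ⊔ P₃ = H := Submodule.sup_eq_of_le_of_finrank_add_eq
    (sup_le (le_sup_left.trans le_sup_left) le_sup_right) (by omega)
  have L12 : P₁ ⊓ P₂ = orthogonal ω H := eq_orthogonal_of_le_of_finrank_add (W := H) hnd
    (H12 ▸ inf_le_orthogonal_sup iso₁ iso₂) (by omega)
  have L13 : P₁ ⊓ P₃ = orthogonal ω H := eq_orthogonal_of_le_of_finrank_add (W := H) hnd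
    (H13 ▸ inf_le_orthogonal_sup iso₁ iso₃) (by omega)
  exact hLne (L12.trans L13.symm)

/-- In a 4-dimensional complex symplectic vector space there are no three pairwise
distinct Lagrangian planes whose pairwise intersections are three distinct lines
and whose span is 3-dimensional. -/
theorem stmt1 (V : Type*) [AddCommGroup V] [Module ℂ V] [FiniteDimensional ℂ V]
    (hV : Module.finrank ℂ V = 4)
    (ω : V →ₗ[ℂ] V →ₗ[ℂ] ℂ)
    (halt : ∀ v : V, ω v v = 0)
    (hnd : ∀ v : V, (∀ w : V, ω v w = 0) → v = 0) :
    ¬ ∃ P₁ P₂ P₃ : Submodule ℂ V,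
      (Module.finrank ℂ P₁ = 2 ∧ ∀ u ∈ P₁, ∀ v ∈ P₁, ω u v = 0) ∧
      (Module.finrank ℂ P₂ = 2 ∧ ∀ u ∈ P₂, ∀ v ∈ P₂, ω u v = 0) ∧
      (Module.finrank ℂ P₃ = 2 ∧ ∀ u ∈ P₃, ∀ v ∈ P₃, ω u v = 0) ∧
      P₁ ≠ P₂ ∧ P₁ ≠ P₃ ∧ P₂ ≠ P₃ ∧
      Module.finrank ℂ ↥(P₁ ⊓ P₂) = 1 ∧
      Module.finrank ℂ ↥(P₁ ⊓ P₃) = 1 ∧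
      Module.finrank ℂ ↥(P₂ ⊓ P₃) = 1 ∧
      (P₁ ⊓ P₂) ≠ (P₁ ⊓ P₃) ∧ (P₁ ⊓ P₂) ≠ (P₂ ⊓ P₃) ∧ (P₁ ⊓ P₃) ≠ (P₂ ⊓ P₃) ∧
      Module.finrank ℂ ↥(P₁ ⊔ P₂ ⊔ P₃) = 3 :=
  stmt1_general V hV ω hnd
end

section
/- Let π : S → C be a relatively minimal elliptic fibration with fundamental line bundle L = (R¹π_*O_S)^* of degree d on a base curve C of genus g. Then p_g(S) = d + g − 1 if L is nontrivial, and p_g(S) = g if L is trivial. In particular, if L is trivial then p_g(S) = g(C). -/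
/-- For a relatively minimal elliptic fibration `π : S → C` with fundamental line
bundle `L = (R¹π_*O_S)^*` of degree `d ≥ 0` on a curve `C` of genus `g`, one has
`p_g(S) = h⁰(C, K_C ⊗ L)`; by Riemann–Roch this equals `d + g − 1` if `L` is
nontrivial and `g` if `L` is trivial. Line bundles on `C` are modelled by their
Picard group with degree and `h⁰` functions satisfying the standard facts. -/
theorem stmt10 (Pic : Type*) [AddCommGroup Pic]
    (deg : Pic →+ ℤ) (h0 : Pic → ℕ) (g : ℤ)
    (KC L : Pic) (d : ℤ)
    (hdL : deg L = d) (hd0 : 0 ≤ d)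
    (hRR : ∀ D : Pic, (h0 D : ℤ) - (h0 (KC - D) : ℤ) = deg D + 1 - g)
    (hKdeg : deg KC = 2 * g - 2)
    (h0KC : (h0 KC : ℤ) = g)
    (hneg : ∀ D : Pic, deg D < 0 → h0 D = 0)
    (hdeg0 : ∀ D : Pic, deg D = 0 → D ≠ 0 → h0 D = 0)
    (pg : ℤ)
    (hpg : pg = h0 (KC + L)) :   -- p_g(S) = h⁰(C, K_C ⊗ L)
    (L ≠ 0 → pg = d + g - 1) ∧ (L = 0 → pg = g) := by
  constructor
  · intro hL
    have hRR' := hRR (KC + L)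
    have hminus : KC - (KC + L) = -L := by abel
    rw [hminus] at hRR'
    have h0negL : h0 (-L) = 0 := by
      rcases lt_or_eq_of_le hd0 with hd | hd
      · exact hneg (-L) (by simp [hdL]; omega)
      · exact hdeg0 (-L) (by simp [hdL]; omega) (by simpa using hL)
    rw [h0negL] at hRR'
    simp only [map_add, hKdeg, hdL] at hRR'
    omega
  · intro hL
    subst hL
    simp only [add_zero] at hpg
    omega
end
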